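/- For distinct primes p and q, the orbits of the action of {p^m q^n : m, n \u2208 \u2124} on \u211d_{>0} by multiplication are all dense in \u211d_{>0}. -/

import Mathlib

/-!
Taking logarithms turns the orbit into a translate of the additive group generated by `log p`
and `log q`. That group is dense because `log p / log q` is irrational: a relation
`b log p = a log q` with `a, b > 0` would give `p ^ b = q ^ a`, contradicting unique
factorisation.
-/

open Real

theorem Nat.Prime.irrational_log_div_log {p q : ℕ} (hp : p.Prime) (hq : q.Prime) (hpq : p ≠ q) :
    Irrational (Real.log p / Real.log q) := by
  rintro ⟨r, hr⟩
  have hlogp : 0 < Real.log p := Real.log_pos (by exact_mod_cast hp.one_lt)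
  have hlogq : 0 < Real.log q := Real.log_pos (by exact_mod_cast hq.one_lt)
  have hr_pos : 0 < r := by
    rw [← Rat.cast_pos (K := ℝ), hr]
    exact _root_.div_pos hlogp hlogq
  obtain ⟨a, ha⟩ := Int.eq_ofNat_of_zero_le (Rat.num_nonneg.2 hr_pos.le)
  have ha0 : a ≠ 0 := by rintro rfl; exact (Rat.num_pos.2 hr_pos).ne' ha
  have hlog : Real.log ((p : ℝ) ^ r.den) = Real.log ((q : ℝ) ^ a) := by
    have hr' : (r.den : ℝ) * (Real.log p / Real.log q) = a := by
      rw [← hr, Rat.cast_def, ha]; field_simp; push_cast; ring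
    rw [Real.log_pow, Real.log_pow, ← hr']
    field_simp
  have hpow : (p : ℝ) ^ r.den = (q : ℝ) ^ a :=
    Real.log_injOn_pos (Set.mem_Ioi.2 (pow_pos (by exact_mod_cast hp.pos) _))
      (Set.mem_Ioi.2 (pow_pos (by exact_mod_cast hq.pos) _)) hlog
  exact hpq (hp.pow_inj' hq r.den_ne_zero ha0 (by exact_mod_cast hpow)).1

theorem Real.exp_zsmul_log_add_zsmul_log {a b : ℝ} (ha : 0 < a) (hb : 0 < b) (m n : ℤ) :
    exp (m • log a + n • log b) = a ^ m * b ^ n := by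
  rw [exp_add, zsmul_eq_mul, zsmul_eq_mul, ← log_zpow, ← log_zpow, exp_log (zpow_pos ha m),
    exp_log (zpow_pos hb n)]

theorem Dense.mem_closure_image_exp_mul {A : Set ℝ} (hA : Dense A) {x y : ℝ} (hx : 0 < x)
    (hy : 0 < y) : y ∈ closure ((fun a => exp a * x) '' A) := by
  have h := map_mem_closure (by fun_prop) (hA (log (y / x)))
    (Set.mapsTo_image (fun a => exp a * x) A)
  rwa [exp_log (div_pos hy hx), div_mul_cancel₀ y hx.ne'] at h

theorem dense_orbits_pq (p q : ℕ) (hp : p.Prime) (hq : q.Prime) (hpq : p ≠ q)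
    (x : ℝ) (hx : 0 < x) (y : ℝ) (hy : 0 < y) :
    y ∈ closure {z : ℝ | ∃ m n : ℤ, z = (p : ℝ) ^ m * (q : ℝ) ^ n * x} := by
  have hdense : Dense (AddSubgroup.closure {log p, log q} : Set ℝ) :=
    dense_addSubgroupClosure_pair_iff.2 (hp.irrational_log_div_log hq hpq)
  refine closure_mono ?_ (hdense.mem_closure_image_exp_mul hx hy)
  rintro _ ⟨a, ha, rfl⟩
  obtain ⟨m, n, rfl⟩ := AddSubgroup.mem_closure_pair.1 ha
  exact ⟨m, n, congrArg (· * x)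
    (exp_zsmul_log_add_zsmul_log (by exact_mod_cast hp.pos) (by exact_mod_cast hq.pos) m n)⟩
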